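/- Pointwise on the underlying probability space, sup_{v∈[0,1/2]} |ỹ(v)| ≤ max{πU₁, πU₂ + 1}·B + sup_{v∈[0,1/2]} |ε̃(v)|. -/

import Mathlib

/-!
Since `μ` is a trigonometric polynomial, `ỹ(v) = ∑_{j<T} b_j D_n(j/T - v) + ε̃(v)` with the
normalized Dirichlet kernel `D_n(x) = n⁻¹ ∑_{t=1}^n e^{2πixt}`, so it suffices to show
`∑_{j<T} |D_n(j/T - v)| ≤ π U₂ + 1`. The sum is unchanged when `v` moves by a multiple of `1/T`
or changes sign, so we may take `0 ≤ v ≤ 1/(2T)`. For `0 < x ≤ 1/2`,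
`|D_n(x)| ≤ |sin(π n x)| / (2 n x)`, which is at most `(π/2) A_m` once `m ≤ n x`. Since
`n > 2gT`, the `j`-th node on either side of `0` has `n x ≳ 2 g j`, so each summand `A_{2jg-1}`
of `U₂` is used at most once per side, and the nodes nearest to `0` contribute at most `1`.
-/

open MeasureTheory ProbabilityTheory Complex Real

/-- `A_m := sup{ |sin(πν)|/(πν) : ν ∈ [m, m+1] }`. -/
noncomputable def sideLobeBound (m : ℕ) : ℝ :=
  ⨆ ν ∈ Set.Icc (m : ℝ) ((m : ℝ) + 1), |Real.sin (Real.pi * ν)| / (Real.pi * ν)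

/-- `U₁ := Σ_{j=0}^{⌊(n−2g−1)/(4g)⌋} A_{(2j+1)g}`. -/
noncomputable def leakageU₁ (n g : ℕ) : ℝ :=
  ∑ j ∈ Finset.Icc (0 : ℤ) ⌊((n : ℝ) - 2 * g - 1) / (4 * g)⌋,
    sideLobeBound ((2 * j + 1).toNat * g)

/-- `U₂ := Σ_{j=1}^{⌊(n−1)/(4g)⌋} A_{2jg−1}`. -/
noncomputable def leakageU₂ (n g : ℕ) : ℝ :=
  ∑ j ∈ Finset.Icc (1 : ℤ) ⌊((n : ℝ) - 1) / (4 * g)⌋,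
    sideLobeBound ((2 * j).toNat * g - 1)

theorem sideLobeBound_nonneg (m : ℕ) : 0 ≤ sideLobeBound m :=
  Real.iSup_nonneg fun _ => Real.iSup_nonneg fun hν =>
    div_nonneg (abs_nonneg _) (mul_nonneg pi_pos.le ((Nat.cast_nonneg m).trans hν.1))

theorem abs_sin_div_le_sideLobeBound_of_mem {m : ℕ} {ν : ℝ}
    (hν : ν ∈ Set.Icc (m : ℝ) (m + 1)) :
    |Real.sin (π * ν)| / (π * ν) ≤ sideLobeBound m := by
  refine le_ciSup₂ (f := fun ν (_ : ν ∈ Set.Icc (m : ℝ) (m + 1)) =>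
    |Real.sin (π * ν)| / (π * ν)) ⟨1, ?_⟩ ν hν
  rintro _ ⟨_, ⟨ν', rfl⟩, ⟨hν', rfl⟩⟩
  have hν'0 : 0 ≤ π * ν' := mul_nonneg pi_pos.le ((Nat.cast_nonneg m).trans hν'.1)
  refine div_le_one_of_le₀ ?_ hν'0
  simpa [abs_of_nonneg hν'0] using Real.abs_sin_le_abs (x := π * ν')

theorem abs_sin_div_le_sideLobeBound {m : ℕ} {ν : ℝ} (hν : (m : ℝ) ≤ ν) :
    |Real.sin (π * ν)| / (π * ν) ≤ sideLobeBound m := by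
  rcases le_or_gt ν (m + 1) with hle | hlt
  · exact abs_sin_div_le_sideLobeBound_of_mem ⟨hν, hle⟩
  -- past the window, compare with the peak `ν = m + 1/2` of `|sin (π ν)|`, where it equals `1`
  have hpeak : |Real.sin (π * (m + 1 / 2))| = 1 := by
    rw [show π * (m + 1 / 2) = m * π + π / 2 by ring, Real.sin_add_pi_div_two]
    exact_mod_cast Real.abs_cos_int_mul_pi m
  have hm : (0 : ℝ) ≤ m := Nat.cast_nonneg m
  calc |Real.sin (π * ν)| / (π * ν) ≤ 1 / (π * ν) :=
        div_le_div_of_nonneg_right (Real.abs_sin_le_one _) (by nlinarith [pi_pos])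
    _ ≤ 1 / (π * (m + 1 / 2)) := by gcongr; linarith
    _ = |Real.sin (π * (m + 1 / 2))| / (π * (m + 1 / 2)) := by rw [hpeak]
    _ ≤ sideLobeBound m := abs_sin_div_le_sideLobeBound_of_mem ⟨by linarith, by linarith⟩

theorem Function.Periodic.sum_range_comp_add {M : Type*} [AddCancelCommMonoid M] {f : ℤ → M}
    {T : ℕ} (hf : Function.Periodic f T) (c : ℤ) :
    ∑ k ∈ Finset.range T, f (k + c) = ∑ k ∈ Finset.range T, f k := by
  have step : ∀ c : ℤ,
      ∑ k ∈ Finset.range T, f (k + (c + 1)) = ∑ k ∈ Finset.range T, f (k + c) := by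
    intro c
    have h := (Finset.sum_range_succ' (fun k : ℕ => f (k + c)) T).symm.trans
      (Finset.sum_range_succ (fun k : ℕ => f (k + c)) T)
    rw [add_comm (T : ℤ) c, hf c] at h
    push_cast at h
    simpa only [add_assoc, add_comm 1 c, CharP.cast_eq_zero, zero_add, add_left_inj] using h
  induction c using Int.induction_on with
  | zero => simp
  | succ c ih => rw [step, ih]
  | pred c ih => rw [← ih, ← step, sub_add_cancel]

theorem Function.Periodic.sum_range_comp_neg {M : Type*} [AddCancelCommMonoid M] {f : ℤ → M}
    {T : ℕ} (hf : Function.Periodic f T) :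
    ∑ k ∈ Finset.range T, f (-k) = ∑ k ∈ Finset.range T, f k :=
  calc ∑ k ∈ Finset.range T, f (-k) = ∑ k ∈ Finset.range T, f (-(T - 1 - k : ℕ)) :=
        (Finset.sum_range_reflect (fun k => f (-k)) T).symm
    _ = ∑ k ∈ Finset.range T, f (k + 1) := by
        refine Finset.sum_congr rfl fun k hk => ?_
        rw [← hf.sub_eq ((k : ℤ) + 1)]
        have := Finset.mem_range.mp hk
        congr 1
        omega
    _ = ∑ k ∈ Finset.range T, f k := hf.sum_range_comp_add 1

theorem norm_le_of_isGreatest {E : Type*} [SeminormedAddGroup E] {b : ℕ → E} {T : ℕ} {B : ℝ}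
    (hB : IsGreatest {x : ℝ | ∃ j < T, b j ≠ 0 ∧ x = ‖b j‖} B) {j : ℕ} (hj : j < T) :
    ‖b j‖ ≤ B := by
  by_cases hbj : b j = 0
  · obtain ⟨_, -, -, rfl⟩ := hB.1
    simp [hbj]
  · exact hB.2 ⟨j, hj, hbj, rfl⟩

theorem le_biSup_of_forall_le {α β : Type*} [ConditionallyCompleteLattice β] {f : α → β}
    {S : Set α} {M : β} (hM : ∀ a, f a ≤ M) {a : α} (ha : a ∈ S) : f a ≤ ⨆ a ∈ S, f a :=
  le_ciSup₂ (f := fun a (_ : a ∈ S) => f a) ⟨M, by rintro _ ⟨_, ⟨a, rfl⟩, ⟨_, rfl⟩⟩; exact hM a⟩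
    a ha

noncomputable def dirichletKernel (n : ℕ) (x : ℝ) : ℂ :=
  (n : ℂ)⁻¹ * ∑ t ∈ Finset.range n, cexp (2 * π * I * x) ^ (t + 1)

theorem norm_cexp_two_pi_I_mul (x : ℝ) : ‖cexp (2 * π * I * x)‖ = 1 := by
  rw [show 2 * π * I * x = ((2 * π * x : ℝ) : ℂ) * I by push_cast; ring, norm_exp_ofReal_mul_I]

theorem norm_cexp_two_pi_I_mul_pow_sub_one (x : ℝ) (k : ℕ) :
    ‖cexp (2 * π * I * x) ^ k - 1‖ = 2 * |Real.sin (π * (k * x))| := by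
  rw [← Complex.exp_nat_mul, show (k : ℂ) * (2 * π * I * x) = I * ((2 * π * (k * x) : ℝ) : ℂ) by
    push_cast; ring, norm_exp_I_mul_ofReal_sub_one, norm_mul, Real.norm_eq_abs, Real.norm_eq_abs,
    abs_two]
  ring_nf

theorem norm_dirichletKernel_le_one (n : ℕ) (x : ℝ) : ‖dirichletKernel n x‖ ≤ 1 := by
  rw [dirichletKernel, norm_mul, norm_inv, Complex.norm_natCast]
  calc (n : ℝ)⁻¹ * ‖∑ t ∈ Finset.range n, cexp (2 * π * I * x) ^ (t + 1)‖
      ≤ (n : ℝ)⁻¹ * ∑ t ∈ Finset.range n, ‖cexp (2 * π * I * x) ^ (t + 1)‖ := by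
        gcongr; exact norm_sum_le _ _
    _ ≤ 1 := by
        simp only [norm_pow, norm_cexp_two_pi_I_mul, one_pow, Finset.sum_const,
          Finset.card_range, nsmul_eq_mul, mul_one]
        exact inv_mul_le_one_of_le₀ le_rfl (Nat.cast_nonneg n)

theorem dirichletKernel_periodic (n : ℕ) : Function.Periodic (dirichletKernel n) 1 := by
  intro x
  simp only [dirichletKernel, ofReal_add, ofReal_one, mul_add, mul_one, Complex.exp_add,
    exp_two_pi_mul_I]

theorem dirichletKernel_neg (n : ℕ) (x : ℝ) :
    dirichletKernel n (-x) = starRingEnd ℂ (dirichletKernel n x) := by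
  simp [dirichletKernel, map_sum, ← exp_conj, map_ofNat]

theorem norm_dirichletKernel_neg (n : ℕ) (x : ℝ) :
    ‖dirichletKernel n (-x)‖ = ‖dirichletKernel n x‖ := by
  rw [dirichletKernel_neg, norm_conj]

theorem norm_dirichletKernel_eq {n : ℕ} {x : ℝ} (hx : Real.sin (π * x) ≠ 0) :
    ‖dirichletKernel n x‖ = |Real.sin (π * (n * x))| / (n * |Real.sin (π * x)|) := by
  set z := cexp (2 * π * I * x)
  have hz1 := norm_cexp_two_pi_I_mul_pow_sub_one x 1
  simp only [pow_one, Nat.cast_one, one_mul] at hz1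
  have hz : z ≠ 1 := by
    rw [← sub_ne_zero, ← norm_ne_zero_iff, hz1]; positivity
  have hgeom : ∑ t ∈ Finset.range n, z ^ (t + 1) = z * ((z ^ n - 1) / (z - 1)) := by
    simp only [pow_succ', ← Finset.mul_sum, geom_sum_eq hz]
  rw [dirichletKernel, hgeom, norm_mul, norm_mul, norm_div, norm_inv, Complex.norm_natCast,
    norm_cexp_two_pi_I_mul, norm_cexp_two_pi_I_mul_pow_sub_one, hz1]
  field_simp

theorem norm_dirichletKernel_le {n : ℕ} {x : ℝ} (hx0 : 0 < x) (hx : x ≤ 1 / 2) :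
    ‖dirichletKernel n x‖ ≤ |Real.sin (π * (n * x))| / (2 * (n * x)) := by
  rcases n.eq_zero_or_pos with rfl | hn
  · simp [dirichletKernel]
  have hsin : 2 * x ≤ Real.sin (π * x) := by
    have := Real.mul_le_sin (x := π * x) (by positivity) (by nlinarith [pi_pos])
    rwa [show 2 / π * (π * x) = 2 * x by field_simp] at this
  rw [norm_dirichletKernel_eq (by linarith), abs_of_pos (a := Real.sin (π * x)) (by linarith),
    show 2 * (n * x) = n * (2 * x) by ring]
  gcongr

theorem norm_dirichletKernel_le_inv {n : ℕ} {x : ℝ} (hx0 : 0 < x) (hx : x ≤ 1 / 2) :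
    ‖dirichletKernel n x‖ ≤ (2 * (n * x))⁻¹ :=
  (norm_dirichletKernel_le hx0 hx).trans <| by
    rw [← one_div]; gcongr; exact Real.abs_sin_le_one _

theorem norm_dirichletKernel_le_sideLobeBound {n m : ℕ} {x : ℝ} (hx0 : 0 < x) (hx : x ≤ 1 / 2)
    (hm : (m : ℝ) ≤ n * x) : ‖dirichletKernel n x‖ ≤ π / 2 * sideLobeBound m :=
  calc ‖dirichletKernel n x‖ ≤ |Real.sin (π * (n * x))| / (2 * (n * x)) :=
        norm_dirichletKernel_le hx0 hx
    _ = π / 2 * (|Real.sin (π * (n * x))| / (π * (n * x))) := by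
        rw [div_mul_div_comm, mul_left_comm 2 π, mul_div_mul_left _ _ pi_ne_zero]
    _ ≤ π / 2 * sideLobeBound m := by gcongr; exact abs_sin_div_le_sideLobeBound hm

theorem leakageU₂_nonneg (n g : ℕ) : 0 ≤ leakageU₂ n g :=
  Finset.sum_nonneg fun _ _ => sideLobeBound_nonneg _

theorem sum_le_pi_div_two_mul_leakageU₂ {n g : ℕ} (hg : 0 < g) {S : Finset ℕ} {F : ℕ → ℝ}
    {φ : ℕ → ℕ} (hφ : Set.InjOn φ S)
    (hF : ∀ k ∈ S, 1 ≤ φ k ∧ 4 * g * φ k < n ∧ F k ≤ π / 2 * sideLobeBound (2 * φ k * g - 1)) :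
    ∑ k ∈ S, F k ≤ π / 2 * leakageU₂ n g := by
  have hφℤ : Set.InjOn (fun k => (φ k : ℤ)) S := fun a ha b hb hab =>
    hφ ha hb (Int.ofNat_inj.mp hab)
  calc ∑ k ∈ S, F k ≤ ∑ k ∈ S, π / 2 * sideLobeBound (2 * φ k * g - 1) :=
        Finset.sum_le_sum fun k hk => (hF k hk).2.2
    _ = π / 2 * ∑ j ∈ S.image (fun k => (φ k : ℤ)), sideLobeBound ((2 * j).toNat * g - 1) := by
        rw [Finset.sum_image hφℤ, Finset.mul_sum]
        refine Finset.sum_congr rfl fun k _ => ?_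
        rw [show (2 * (φ k : ℤ)).toNat = 2 * φ k by omega]
    _ ≤ π / 2 * leakageU₂ n g := by
        gcongr
        refine Finset.sum_le_sum_of_subset_of_nonneg ?_ fun _ _ _ => sideLobeBound_nonneg _
        intro j hj
        obtain ⟨k, hk, rfl⟩ := Finset.mem_image.mp hj
        obtain ⟨hk1, hkn, -⟩ := hF k hk
        refine Finset.mem_Icc.mpr ⟨by exact_mod_cast hk1, Int.le_floor.mpr ?_⟩
        have : ((4 * g * φ k + 1 : ℕ) : ℝ) ≤ n := by exact_mod_cast hkn
        push_cast at this ⊢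
        rw [le_div_iff₀ (by positivity)]
        linarith

theorem exists_sum_norm_dirichletKernel_eq (n : ℕ) {T : ℕ} (hT : 0 < T) (v : ℝ) :
    ∃ s : ℝ, 0 ≤ s ∧ 2 * T * s ≤ 1 ∧ ∑ k ∈ Finset.range T, ‖dirichletKernel n (k / T - v)‖ =
      ∑ k ∈ Finset.range T, ‖dirichletKernel n (k / T - s)‖ := by
  have hT' : (T : ℝ) ≠ 0 := by positivity
  set h : ℝ → ℤ → ℝ := fun w k => ‖dirichletKernel n (k / T - w)‖
  have hper (w : ℝ) : Function.Periodic (h w) T := fun k => by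
    simp only [h, Int.cast_add, Int.cast_natCast, add_div, div_self hT', add_sub_right_comm,
      dirichletKernel_periodic n _]
  have hshift (w : ℝ) (c : ℤ) :
      ∑ k ∈ Finset.range T, h w k = ∑ k ∈ Finset.range T, h (w - c / T) k := by
    rw [← (hper w).sum_range_comp_add c]
    simp only [h, Int.cast_add, Int.cast_natCast, add_div, sub_sub_eq_add_sub, add_sub_assoc]
  have hrefl (w : ℝ) : ∑ k ∈ Finset.range T, h w k = ∑ k ∈ Finset.range T, h (-w) k := by
    rw [← (hper w).sum_range_comp_neg]
    refine Finset.sum_congr rfl fun k _ => ?_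
    simp only [h, ← norm_dirichletKernel_neg n (_ / T - -w)]
    push_cast
    ring_nf
  -- shift `v` by the nearest multiple of `1 / T`, then reflect if it lands below zero
  have hs : 2 * T * |v - round (v * T) / T| ≤ 1 :=
    calc 2 * T * |v - round (v * T) / T| = 2 * |T * (v - round (v * T) / T)| := by
          rw [abs_mul, Nat.abs_cast]; ring
      _ = 2 * |v * T - round (v * T)| := by congr 2; field_simp
      _ ≤ 1 := by linarith [abs_sub_round (v * T)]
  have hsum := hshift v (round (v * T))
  simp only [h, Int.cast_natCast] at hsum hrefl
  rcases le_or_gt 0 (v - round (v * T) / T) with hs0 | hs0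
  · exact ⟨_, hs0, by rwa [abs_of_nonneg hs0] at hs, hsum⟩
  · exact ⟨_, by linarith, by rwa [abs_of_neg hs0] at hs, hsum.trans (hrefl _)⟩

section

variable {n g T : ℕ} {s : ℝ}

theorem sum_norm_dirichletKernel_wrapped_le (hg : 0 < g) (hn : 2 * g * T ≤ n) (hs0 : 0 ≤ s) :
    ∑ k ∈ (Finset.Ico 1 T).filter (fun k : ℕ => ¬(k / T - s ≤ (1 / 2 : ℝ))),
      ‖dirichletKernel n (k / T - s)‖ ≤ π / 2 * leakageU₂ n g := by
  refine sum_le_pi_div_two_mul_leakageU₂ hg (φ := fun k => T - k) ?_ fun k hk => ?_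
  · intro a ha b hb hab
    rw [Finset.mem_coe, Finset.mem_filter, Finset.mem_Ico] at ha hb
    simp only at hab
    omega
  obtain ⟨hkT, hk⟩ := Finset.mem_filter.mp hk
  rw [Finset.mem_Ico] at hkT
  have hT0 : 0 < T := by omega
  have hT : (0 : ℝ) < T := by exact_mod_cast hT0
  have hTk : 0 < T - k := by omega
  have hn' : 2 * g * (T : ℝ) ≤ n := by exact_mod_cast hn
  -- the point `k / T - s` lies at distance `δ` below the integer `1`
  set δ : ℝ := ((T - k : ℕ) : ℝ) / T + s
  have hx : (k : ℝ) / T - s = -δ + 1 := by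
    simp only [δ, Nat.cast_sub hkT.2.le]; field_simp; ring
  have hδ : δ < 1 / 2 := by linarith
  have hδ0 : 0 < δ := by positivity
  have hnδ : 2 * ((T - k : ℕ) : ℝ) * g ≤ n * δ :=
    calc 2 * ((T - k : ℕ) : ℝ) * g = 2 * g * T * ((T - k : ℕ) / T) := by field_simp
      _ ≤ n * ((T - k : ℕ) / T) := by gcongr
      _ ≤ n * δ := by gcongr; linarith
  have hn0 : (0 : ℝ) < n := lt_of_lt_of_le (by positivity) hn'
  refine ⟨hTk, ?_, ?_⟩
  · have : (4 * g * (T - k) : ℕ) < (n : ℝ) := by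
      push_cast; nlinarith [mul_lt_mul_of_pos_left hδ hn0]
    exact_mod_cast this
  · rw [hx, dirichletKernel_periodic, norm_dirichletKernel_neg]
    refine norm_dirichletKernel_le_sideLobeBound hδ0 hδ.le ?_
    rw [Nat.cast_pred (by positivity)]
    push_cast at hnδ ⊢
    linarith

theorem sum_norm_dirichletKernel_central_erase_one_le (hg : 0 < g) (hn : 2 * g * T + 1 ≤ n)
    (hs : 2 * T * s ≤ 1) :
    ∑ k ∈ ((Finset.Ico 1 T).filter (fun k : ℕ => k / T - s ≤ (1 / 2 : ℝ))).erase 1,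
      ‖dirichletKernel n (k / T - s)‖ ≤ π / 2 * leakageU₂ n g := by
  refine sum_le_pi_div_two_mul_leakageU₂ hg (φ := fun k => k - 1) ?_ fun k hk => ?_
  · intro a ha b hb hab
    rw [Finset.mem_coe, Finset.mem_erase, Finset.mem_filter, Finset.mem_Ico] at ha hb
    simp only at hab
    omega
  obtain ⟨hk1, hk⟩ := Finset.mem_erase.mp hk
  obtain ⟨hkT, hx⟩ := Finset.mem_filter.mp hk
  rw [Finset.mem_Ico] at hkT
  have hT0 : 0 < T := by omega
  have hT : (0 : ℝ) < T := by exact_mod_cast hT0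
  have hk2 : (2 : ℝ) ≤ k := by exact_mod_cast (show 2 ≤ k by omega)
  have hn' : 2 * g * (T : ℝ) + 1 ≤ n := by exact_mod_cast hn
  set x : ℝ := k / T - s
  have hxT : x * T = k - s * T := by simp only [x]; field_simp
  have hx0 : 0 < x := by nlinarith
  -- from `x ≥ (k - 1/2) / T` and `n > 2 g T`
  have hnx : (2 * k - 1) * (g : ℝ) ≤ n * x := by nlinarith
  have hk1' : 0 < k - 1 := by omega
  refine ⟨hk1', ?_, ?_⟩
  · have : (4 * g * (k - 1) : ℕ) < (n : ℝ) := by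
      push_cast [Nat.cast_sub (show 1 ≤ k by omega)]; nlinarith
    exact_mod_cast this
  · refine norm_dirichletKernel_le_sideLobeBound hx0 hx ?_
    rw [Nat.cast_pred (by positivity)]
    push_cast [Nat.cast_sub (show 1 ≤ k by omega)]
    nlinarith

theorem sum_norm_dirichletKernel_central_le_of_mul_le_one (hg : 2 ≤ g) (hn : 2 * g * T + 1 ≤ n)
    (hs0 : 0 ≤ s) (hs : 2 * T * s ≤ 1) (hns : n * s ≤ 1) :
    ∑ k ∈ (Finset.Ico 1 T).filter (fun k : ℕ => k / T - s ≤ (1 / 2 : ℝ)),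
      ‖dirichletKernel n (k / T - s)‖ ≤ π / 2 * leakageU₂ n g := by
  refine sum_le_pi_div_two_mul_leakageU₂ (by omega) (φ := fun k => k)
    (fun _ _ _ _ h => h) fun k hk => ?_
  obtain ⟨hkT, hx⟩ := Finset.mem_filter.mp hk
  rw [Finset.mem_Ico] at hkT
  have hT0 : 0 < T := by omega
  have hT : (0 : ℝ) < T := by exact_mod_cast hT0
  have hk0 : 0 < k := hkT.1
  have hk1 : (1 : ℝ) ≤ k := by exact_mod_cast hk0
  have hg' : (2 : ℝ) ≤ g := by exact_mod_cast hg
  have hn' : 2 * g * (T : ℝ) + 1 ≤ n := by exact_mod_cast hn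
  set x : ℝ := k / T - s
  have hxT : x * T = k - s * T := by simp only [x]; field_simp
  have hx0 : 0 < x := by nlinarith
  -- `n s ≤ 1` and `n > 4 T` give `4 T s ≤ 1`, so `x ≤ 1/2` forces `2 k < T + 1`
  have h2k : 2 * k ≤ T := by
    have h4 : 4 * (T : ℝ) * s ≤ 1 := by
      nlinarith [mul_le_mul_of_nonneg_right (show 4 * (T : ℝ) ≤ n - 1 by nlinarith) hs0]
    have : (2 * k : ℕ) < (T : ℝ) + 1 := by push_cast; nlinarith
    exact Nat.lt_succ_iff.mp (by exact_mod_cast this)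
  have hnx : 2 * k * (g : ℝ) - 1 ≤ n * x := by
    have : (2 * k * g - 1) * (T : ℝ) ≤ n * x * T := by
      have e : (n : ℝ) * x * T = n * k - n * s * T := by linear_combination (n : ℝ) * hxT
      nlinarith [mul_le_mul_of_nonneg_right hns hT.le]
    exact le_of_mul_le_mul_right this hT
  refine ⟨hk0, ?_, ?_⟩
  · calc 4 * g * k = 2 * g * (2 * k) := by ring
      _ ≤ 2 * g * T := Nat.mul_le_mul_left _ h2k
      _ < n := by omega
  · refine norm_dirichletKernel_le_sideLobeBound hx0 hx ?_
    rw [Nat.cast_pred (by positivity)]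
    push_cast
    exact hnx

theorem norm_dirichletKernel_add_sum_central_le_of_one_lt_mul (hg : 0 < g) (hT : 0 < T)
    (hn : 2 * g * T + 1 ≤ n) (hs : 2 * T * s ≤ 1) (hns : 1 < n * s) :
    ‖dirichletKernel n s‖ + ∑ k ∈ (Finset.Ico 1 T).filter (fun k : ℕ => k / T - s ≤ (1 / 2 : ℝ)),
      ‖dirichletKernel n (k / T - s)‖ ≤ 1 + π / 2 * leakageU₂ n g := by
  have hT' : (1 : ℝ) ≤ T := by exact_mod_cast hT
  have hg' : (1 : ℝ) ≤ g := by exact_mod_cast hg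
  have hn' : 2 * g * (T : ℝ) + 1 ≤ n := by exact_mod_cast hn
  have hs0 : 0 < s := by nlinarith
  have h0 : ‖dirichletKernel n s‖ ≤ 1 / 2 :=
    (norm_dirichletKernel_le_inv hs0 (by nlinarith)).trans (by rw [← one_div]; gcongr; linarith)
  set S := (Finset.Ico 1 T).filter (fun k : ℕ => k / T - s ≤ (1 / 2 : ℝ))
  have h1 : ∑ k ∈ S, ‖dirichletKernel n (k / T - s)‖ ≤
      1 / 2 + ∑ k ∈ S.erase 1, ‖dirichletKernel n (k / T - s)‖ := by
    by_cases h1S : 1 ∈ S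
    · rw [← Finset.add_sum_erase _ _ h1S]
      gcongr
      set x : ℝ := ((1 : ℕ) : ℝ) / T - s
      have hx : x ≤ 1 / 2 := (Finset.mem_filter.mp h1S).2
      have hxT : x * T = 1 - s * T := by simp only [x, Nat.cast_one]; field_simp
      have hnx : (g : ℝ) ≤ n * x := by
        have e : (n : ℝ) * x * T = n - n * s * T := by linear_combination (n : ℝ) * hxT
        have : (g : ℝ) * T ≤ n * x * T := by nlinarith
        exact le_of_mul_le_mul_right this (by positivity)
      refine (norm_dirichletKernel_le_inv (by nlinarith) hx).trans ?_
      rw [← one_div]; gcongr; linarith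
    · rw [Finset.erase_eq_of_notMem h1S]; linarith
  linarith [sum_norm_dirichletKernel_central_erase_one_le hg hn hs]

theorem sum_norm_dirichletKernel_le_of_nonneg (hg : 2 ≤ g) (hT : 0 < T)
    (hn : 2 * g * T + 1 ≤ n) (hs0 : 0 ≤ s) (hs : 2 * T * s ≤ 1) :
    ∑ k ∈ Finset.range T, ‖dirichletKernel n (k / T - s)‖ ≤ π * leakageU₂ n g + 1 := by
  rw [Finset.sum_range_eq_add_Ico _ hT, ← Finset.sum_filter_add_sum_filter_not (Finset.Ico 1 T)
    (fun k : ℕ => k / T - s ≤ (1 / 2 : ℝ)), ← add_assoc]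
  simp only [Nat.cast_zero, zero_div, zero_sub, norm_dirichletKernel_neg]
  have hwrapped := sum_norm_dirichletKernel_wrapped_le (n := n) (g := g) (T := T) (by omega)
    (by omega) hs0
  have hcentral : ‖dirichletKernel n s‖ +
      ∑ k ∈ (Finset.Ico 1 T).filter (fun k : ℕ => k / T - s ≤ (1 / 2 : ℝ)),
        ‖dirichletKernel n (k / T - s)‖ ≤ 1 + π / 2 * leakageU₂ n g := by
    rcases le_or_gt (n * s) 1 with hns | hns
    · exact add_le_add (norm_dirichletKernel_le_one n s)
        (sum_norm_dirichletKernel_central_le_of_mul_le_one hg hn hs0 hs hns)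
    · exact norm_dirichletKernel_add_sum_central_le_of_one_lt_mul (by omega) hT hn hs hns
  linarith

theorem sum_norm_dirichletKernel_le (hg : 2 ≤ g) (hT : 0 < T)
    (hn : 2 * g * T + 1 ≤ n) (v : ℝ) :
    ∑ k ∈ Finset.range T, ‖dirichletKernel n (k / T - v)‖ ≤ π * leakageU₂ n g + 1 := by
  obtain ⟨s, hs0, hs, heq⟩ := exists_sum_norm_dirichletKernel_eq n hT v
  exact heq ▸ sum_norm_dirichletKernel_le_of_nonneg hg hT hn hs0 hs

end

theorem dft_eq_sum_mul_dirichletKernel {n T : ℕ} {b μ : ℕ → ℂ}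
    (hμ : ∀ t, μ t = ∑ j ∈ Finset.range T, b j * cexp (2 * π * I * j * t / T)) (v : ℝ) :
    (1 / (n : ℂ)) * ∑ t : Fin n, μ ((t : ℕ) + 1) * cexp (-(2 * π * I * v * ((t : ℕ) + 1))) =
      ∑ j ∈ Finset.range T, b j * dirichletKernel n (j / T - v) := by
  rw [Fin.sum_univ_eq_sum_range (fun t => μ (t + 1) * cexp (-(2 * π * I * v * (t + 1)))) n]
  simp only [hμ, dirichletKernel, Finset.sum_mul, Finset.mul_sum]
  rw [Finset.sum_comm]
  refine Finset.sum_congr rfl fun j _ => Finset.sum_congr rfl fun t _ => ?_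
  have hexp : cexp (2 * π * I * j * ((t + 1 : ℕ) : ℂ) / T) * cexp (-(2 * π * I * v * (t + 1))) =
      cexp (2 * π * I * ((j / T - v : ℝ) : ℂ)) ^ (t + 1) := by
    rw [← Complex.exp_nat_mul, ← Complex.exp_add]
    push_cast
    ring_nf
  rw [one_div, mul_assoc (b j), hexp]
  ring

theorem norm_dft_le {n : ℕ} (a : Fin n → ℂ) (v : ℝ) :
    ‖(1 / (n : ℂ)) * ∑ t : Fin n, a t * cexp (-(2 * π * I * v * ((t : ℕ) + 1)))‖ ≤
      ∑ t, ‖a t‖ := by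
  rcases n.eq_zero_or_pos with rfl | hn
  · simp
  have hexp (t : Fin n) : ‖cexp (-(2 * π * I * v * ((t : ℕ) + 1)))‖ = 1 := by
    rw [Complex.norm_exp]; simp
  rw [norm_mul]
  calc ‖1 / (n : ℂ)‖ * ‖∑ t : Fin n, a t * cexp (-(2 * π * I * v * ((t : ℕ) + 1)))‖
      ≤ 1 * ∑ t : Fin n, ‖a t‖ := by
        gcongr
        · rw [norm_div, norm_one, Complex.norm_natCast]
          exact div_le_one_of_le₀ (by exact_mod_cast hn) (Nat.cast_nonneg n)
        · refine (norm_sum_le _ _).trans (le_of_eq ?_)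
          simp only [norm_mul, hexp, mul_one]
    _ = ∑ t, ‖a t‖ := one_mul _

theorem norm_sum_mul_dirichletKernel_le {n g T : ℕ} (hg : 2 ≤ g) (hT : 0 < T)
    (hn : 2 * g * T + 1 ≤ n) {b : ℕ → ℂ} {B : ℝ} (hb : ∀ j < T, ‖b j‖ ≤ B) (v : ℝ) :
    ‖∑ j ∈ Finset.range T, b j * dirichletKernel n (j / T - v)‖ ≤ B * (π * leakageU₂ n g + 1) :=
  calc ‖∑ j ∈ Finset.range T, b j * dirichletKernel n (j / T - v)‖
      ≤ ∑ j ∈ Finset.range T, B * ‖dirichletKernel n (j / T - v)‖ := by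
        refine (norm_sum_le _ _).trans (Finset.sum_le_sum fun j hj => ?_)
        rw [norm_mul]
        gcongr
        exact hb j (Finset.mem_range.mp hj)
    _ ≤ B * (π * leakageU₂ n g + 1) := by
        rw [← Finset.mul_sum]
        exact mul_le_mul_of_nonneg_left (sum_norm_dirichletKernel_le hg hT hn v)
          ((norm_nonneg _).trans (hb 0 hT))

theorem periodogram_sup_upper_bound_general
    {Ω : Type*}
    (n : ℕ)
    (ε : Fin n → Ω → ℝ)
    (εdft : ℝ → Ω → ℂ)
    (hεdft : ∀ v ω, εdft v ω = (1 / (n : ℂ)) *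
        ∑ t : Fin n, (ε t ω : ℂ) * Complex.exp (-(2 * Real.pi * Complex.I * v * ((t : ℕ) + 1))))
    (g T : ℕ) (hg2 : 2 ≤ g)
    (hT : 0 < T) (hTn : (T : ℝ) < n / (2 * g))
    (b : ℕ → ℂ)
    (μ : ℕ → ℂ)
    (hμ : ∀ t, μ t = ∑ j ∈ Finset.range T,
        b j * Complex.exp (2 * Real.pi * Complex.I * j * t / T))
    (ydft : ℝ → Ω → ℂ)
    (hydft : ∀ v ω, ydft v ω = (1 / (n : ℂ)) *
        ∑ t : Fin n, (μ ((t : ℕ) + 1) + (ε t ω : ℂ)) *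
          Complex.exp (-(2 * Real.pi * Complex.I * v * ((t : ℕ) + 1))))
    (B : ℝ) (hB : IsGreatest {x : ℝ | ∃ j < T, b j ≠ 0 ∧ x = ‖b j‖} B) :
    ∀ ω : Ω, (⨆ v ∈ Set.Icc (0 : ℝ) (1 / 2), ‖ydft v ω‖) ≤
        max (Real.pi * leakageU₁ n g) (Real.pi * leakageU₂ n g + 1) * B +
          ⨆ v ∈ Set.Icc (0 : ℝ) (1 / 2), ‖εdft v ω‖ := by
  intro ω
  have hn : 2 * g * T + 1 ≤ n := by
    rw [lt_div_iff₀ (by positivity)] at hTn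
    exact_mod_cast (show ((2 * g * T : ℕ) : ℝ) < n by push_cast; linarith)
  have hb (j : ℕ) (hj : j < T) : ‖b j‖ ≤ B := norm_le_of_isGreatest hB hj
  have hB0 : 0 ≤ B := (norm_nonneg _).trans (hb 0 hT)
  have hU₂ := leakageU₂_nonneg n g
  have hε : 0 ≤ ⨆ v ∈ Set.Icc (0 : ℝ) (1 / 2), ‖εdft v ω‖ :=
    Real.iSup_nonneg fun _ => Real.iSup_nonneg fun _ => norm_nonneg _
  refine Real.iSup_le (fun v => Real.iSup_le (fun hv => ?_) (by positivity)) (by positivity)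
  calc ‖ydft v ω‖ = ‖∑ j ∈ Finset.range T, b j * dirichletKernel n (j / T - v) + εdft v ω‖ := by
        rw [hydft, hεdft, ← dft_eq_sum_mul_dirichletKernel hμ v, ← mul_add,
          ← Finset.sum_add_distrib]
        simp only [add_mul]
    _ ≤ B * (π * leakageU₂ n g + 1) + ‖εdft v ω‖ :=
        (norm_add_le _ _).trans (add_le_add (norm_sum_mul_dirichletKernel_le hg2 hT hn hb v) le_rfl)
    _ ≤ _ := by
        rw [mul_comm]
        gcongr
        · exact le_max_right _ _
        · exact le_biSup_of_forall_le (fun v => hεdft v ω ▸ norm_dft_le _ v) hv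

/-- Pointwise on the underlying probability space,
`sup_{v∈[0,1/2]} |ỹ(v)| ≤ max{πU₁, πU₂ + 1} B + sup_{v∈[0,1/2]} |ε̃(v)|`. -/
theorem periodogram_sup_upper_bound
    {Ω : Type*} [MeasureSpace Ω] (hP : IsProbabilityMeasure (ℙ : Measure Ω))
    (n : ℕ) (hn : 0 < n) (σ : ℝ) (hσ : 0 < σ)
    (ε : Fin n → Ω → ℝ)
    (hmeas : ∀ t, Measurable (ε t))
    (hindep : iIndepFun ε ℙ)
    (hsubg : ∀ t (l : ℝ), ∫ ω, Real.exp (l * ε t ω) ∂ℙ ≤ Real.exp (σ ^ 2 * l ^ 2 / 2))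
    (εdft : ℝ → Ω → ℂ)
    (hεdft : ∀ v ω, εdft v ω = (1 / (n : ℂ)) *
        ∑ t : Fin n, (ε t ω : ℂ) * Complex.exp (-(2 * Real.pi * Complex.I * v * ((t : ℕ) + 1))))
    (g T : ℕ) (hg2 : 2 ≤ g) (hgn : Real.sqrt n ≤ g)
    (hT : 0 < T) (hTn : (T : ℝ) < n / (2 * g))
    (b : ℕ → ℂ)
    (hb0 : (b 0).im = 0)
    (hbconj : ∀ j, 1 ≤ j → j ≤ T - 1 → b j = starRingEnd ℂ (b (T - j)))
    (hbne : ∃ j < T, b j ≠ 0)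
    (μ : ℕ → ℂ)
    (hμ : ∀ t, μ t = ∑ j ∈ Finset.range T,
        b j * Complex.exp (2 * Real.pi * Complex.I * j * t / T))
    (ydft : ℝ → Ω → ℂ)
    (hydft : ∀ v ω, ydft v ω = (1 / (n : ℂ)) *
        ∑ t : Fin n, (μ ((t : ℕ) + 1) + (ε t ω : ℂ)) *
          Complex.exp (-(2 * Real.pi * Complex.I * v * ((t : ℕ) + 1))))
    (B : ℝ) (hB : IsGreatest {x : ℝ | ∃ j < T, b j ≠ 0 ∧ x = ‖b j‖} B) :
    ∀ ω : Ω, (⨆ v ∈ Set.Icc (0 : ℝ) (1 / 2), ‖ydft v ω‖) ≤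
        max (Real.pi * leakageU₁ n g) (Real.pi * leakageU₂ n g + 1) * B +
          ⨆ v ∈ Set.Icc (0 : ℝ) (1 / 2), ‖εdft v ω‖ :=
  periodogram_sup_upper_bound_general n ε εdft hεdft g T hg2 hT hTn b μ hμ ydft hydft B hB
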